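/- arXiv:1404.1549 — 2 statements merged into one kernel-verified Lean document; each statement's English description precedes it below -/
import Mathlib

section
/- Let G and H be graphs without isolated vertices. Then G and H are isomorphic as graphs if and only if B(G) and B(H) are isomorphic as ℤ/2-posets. -/
/-- A graph: a vertex type with a symmetric edge relation (loops allowed). -/
structure LoopGraph where
  V : Type
  E : V → V → Prop
  symm : ∀ ⦃x y⦄, E x y → E y x

/-- Graph homomorphisms. -/
def LoopGraph.Hom (G H : LoopGraph) : Type :=
  {f : G.V → H.V // ∀ ⦃x y⦄, G.E x y → H.E (f x) (f y)}

/-- Graph isomorphisms: bijective homomorphisms whose inverse is a homomorphism. -/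
structure LoopGraph.Iso (G H : LoopGraph) extends G.V ≃ H.V where
  edge_iff : ∀ x y, G.E x y ↔ H.E (toEquiv x) (toEquiv y)

/-- The complete graph `K₂` on two vertices. -/
def K2 : LoopGraph := ⟨Fin 2, fun x y => x ≠ y, fun _ _ h => h.symm⟩

/-- The tensor (categorical) product of graphs. -/
def LoopGraph.tensor (G H : LoopGraph) : LoopGraph :=
  ⟨G.V × H.V, fun p q => G.E p.1 q.1 ∧ H.E p.2 q.2,
   fun _ _ h => ⟨G.symm h.1, H.symm h.2⟩⟩

/-- No isolated vertices. -/
def LoopGraph.NoIsolated (G : LoopGraph) : Prop := ∀ x, ∃ y, G.E x y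

/-- The box complex `B(G)`: pairs of nonempty subsets `(σ, τ)` with `σ × τ ⊆ E(G)`. -/
def LoopGraph.Box (G : LoopGraph) : Type :=
  {p : Set G.V × Set G.V //
    p.1.Nonempty ∧ p.2.Nonempty ∧ ∀ x ∈ p.1, ∀ y ∈ p.2, G.E x y}

instance (G : LoopGraph) : PartialOrder G.Box where
  le a b := a.1.1 ⊆ b.1.1 ∧ a.1.2 ⊆ b.1.2
  le_refl a := ⟨subset_rfl, subset_rfl⟩
  le_trans a b c h1 h2 := ⟨h1.1.trans h2.1, h1.2.trans h2.2⟩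
  le_antisymm a b h1 h2 :=
    Subtype.ext (Prod.ext (h1.1.antisymm h2.1) (h1.2.antisymm h2.2))

/-- The canonical involution `(σ,τ) ↦ (τ,σ)` of the box complex. -/
def LoopGraph.Box.flip {G : LoopGraph} (p : G.Box) : G.Box :=
  ⟨(p.1.2, p.1.1), p.2.2.1, p.2.1, fun x hx y hy => G.symm (p.2.2.2 y hy x hx)⟩

/-! An order isomorphism `B(G) ≅ B(H)` permutes the minimal elements, i.e. the atoms `({x}, {y})`,
so it is a bijection `F` between the arcs (ordered edges) of `G` and of `H`. It commutes with
reversal of arcs and preserves collinearity (sharing a source or a target), because two atoms are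
collinear exactly when some element of the box complex lies above them and above no other atom.
`F` may send a row of `G` into a column of `H`. Call an arc twisted when `F` sends one of its
row-mates into its column or one of its column-mates into its row: twistedness is constant along
rows, so reversing the image of every twisted arc yields an arc bijection that maps rows into rows
and still commutes with reversal, and such a bijection comes from a graph isomorphism. -/

namespace LoopGraph

variable {G H : LoopGraph}

@[ext]
structure Arc (G : LoopGraph) where
  src : G.V
  tgt : G.V
  adj : G.E src tgt

namespace Arc

def swap (a : G.Arc) : G.Arc := ⟨a.tgt, a.src, G.symm a.adj⟩

@[simp] lemma swap_src (a : G.Arc) : a.swap.src = a.tgt := rfl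

@[simp] lemma swap_tgt (a : G.Arc) : a.swap.tgt = a.src := rfl

@[simp] lemma swap_swap (a : G.Arc) : a.swap.swap = a := rfl

def Collinear (a b : G.Arc) : Prop := a.src = b.src ∨ a.tgt = b.tgt

end Arc

noncomputable def NoIsolated.arcFrom (hG : G.NoIsolated) (x : G.V) : G.Arc :=
  ⟨x, (hG x).choose, (hG x).choose_spec⟩

@[simp] lemma NoIsolated.arcFrom_src (hG : G.NoIsolated) (x : G.V) : (hG.arcFrom x).src = x := rfl

section VertexMap

variable {m : G.Arc → H.Arc}

noncomputable def vertexMap (m : G.Arc → H.Arc) (hG : G.NoIsolated) (x : G.V) : H.V :=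
  (m (hG.arcFrom x)).src

lemma vertexMap_src (hsrc : ∀ a b, a.src = b.src → (m a).src = (m b).src) (hG : G.NoIsolated)
    (a : G.Arc) : vertexMap m hG a.src = (m a).src :=
  hsrc _ _ rfl

lemma vertexMap_tgt (hsrc : ∀ a b, a.src = b.src → (m a).src = (m b).src)
    (hswap : ∀ a, m a.swap = (m a).swap) (hG : G.NoIsolated) (a : G.Arc) :
    vertexMap m hG a.tgt = (m a).tgt := by
  simpa [hswap] using vertexMap_src hsrc hG a.swap

lemma adj_vertexMap (hsrc : ∀ a b, a.src = b.src → (m a).src = (m b).src)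
    (hswap : ∀ a, m a.swap = (m a).swap) (hG : G.NoIsolated) {x y : G.V} (h : G.E x y) :
    H.E (vertexMap m hG x) (vertexMap m hG y) := by
  simpa only [vertexMap_src hsrc hG ⟨x, y, h⟩, vertexMap_tgt hsrc hswap hG ⟨x, y, h⟩]
    using (m ⟨x, y, h⟩).adj

lemma vertexMap_leftInverse {m' : H.Arc → G.Arc}
    (hsrc' : ∀ a b, a.src = b.src → (m' a).src = (m' b).src) (hm : ∀ a, m' (m a) = a)
    (hG : G.NoIsolated) (hH : H.NoIsolated) :
    Function.LeftInverse (vertexMap m' hH) (vertexMap m hG) := fun x => by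
  change vertexMap m' hH (m (hG.arcFrom x)).src = x
  rw [vertexMap_src hsrc', hm, NoIsolated.arcFrom_src]

end VertexMap

noncomputable def Iso.ofArcEquiv (e : G.Arc ≃ H.Arc)
    (hsrc : ∀ a b, a.src = b.src → (e a).src = (e b).src)
    (hsrc_symm : ∀ a b, a.src = b.src → (e.symm a).src = (e.symm b).src)
    (hswap : ∀ a, e a.swap = (e a).swap) (hG : G.NoIsolated) (hH : H.NoIsolated) : G.Iso H :=
  have hswap_symm : ∀ b, e.symm b.swap = (e.symm b).swap := fun b =>
    e.symm_apply_eq.2 (by rw [hswap, e.apply_symm_apply])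
  have hinv := vertexMap_leftInverse hsrc_symm e.symm_apply_apply hG hH
  { toFun := vertexMap e hG
    invFun := vertexMap e.symm hH
    left_inv := hinv
    right_inv := vertexMap_leftInverse hsrc e.apply_symm_apply hH hG
    edge_iff := fun x y => ⟨adj_vertexMap hsrc hswap hG, fun h => by
      simpa only [Equiv.coe_fn_mk, hinv x, hinv y] using
        adj_vertexMap hsrc_symm hswap_symm hH h⟩ }

structure IsArcIso (F : G.Arc ≃ H.Arc) : Prop where
  collinear_iff : ∀ a b, (F a).Collinear (F b) ↔ a.Collinear b
  map_swap : ∀ a, F a.swap = (F a).swap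

namespace IsArcIso

variable {F : G.Arc ≃ H.Arc}

lemma symm (hF : IsArcIso F) : IsArcIso F.symm where
  collinear_iff a b := by simpa using (hF.collinear_iff (F.symm a) (F.symm b)).symm
  map_swap b := F.symm_apply_eq.2 (by rw [hF.map_swap, F.apply_symm_apply])

end IsArcIso

def Twisted (F : G.Arc ≃ H.Arc) (a : G.Arc) : Prop :=
  ∃ b ≠ a,
    (b.src = a.src ∧ (F b).tgt = (F a).tgt) ∨ (b.tgt = a.tgt ∧ (F b).src = (F a).src)

section Twisted

variable {F : G.Arc ≃ H.Arc}

lemma twisted_of_src_eq_of_tgt_eq {a b : G.Arc} (hne : b ≠ a) (hsrc : b.src = a.src)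
    (htgt : (F b).tgt = (F a).tgt) : Twisted F a :=
  ⟨b, hne, Or.inl ⟨hsrc, htgt⟩⟩

/-- A twisting row-mate `c` of `a` would make `F a`, `F b`, `F c` pairwise collinear but not on one
line; a twisting column-mate `c` would make `F b`, `F c` collinear although `b`, `c` are not. -/
lemma not_twisted_of_src_eq_of_src_eq (hF : IsArcIso F) {a b : G.Arc} (hne : b ≠ a)
    (hsrc : b.src = a.src) (hFsrc : (F b).src = (F a).src) : ¬ Twisted F a := by
  rintro ⟨c, hca, ⟨hcsrc, hFctgt⟩ | ⟨hctgt, hFcsrc⟩⟩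
  · rcases (hF.collinear_iff c b).2 (Or.inl (hcsrc.trans hsrc.symm)) with h | h
    · exact hca (F.injective (Arc.ext (h.trans hFsrc) hFctgt))
    · exact hne (F.injective (Arc.ext hFsrc (h.symm.trans hFctgt)))
  · rcases (hF.collinear_iff c b).1 (Or.inl (hFcsrc.trans hFsrc.symm)) with h | h
    · exact hca (Arc.ext (h.trans hsrc) hctgt)
    · exact hne (Arc.ext hsrc (h.symm.trans hctgt))

lemma twisted_swap (hF : IsArcIso F) (a : G.Arc) : Twisted F a.swap ↔ Twisted F a := by
  suffices ∀ a : G.Arc, Twisted F a → Twisted F a.swap from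
    ⟨fun h => by simpa using this _ h, this a⟩
  rintro a ⟨b, hne, h⟩
  refine ⟨b.swap, fun h' => hne (by simpa using congrArg Arc.swap h'), ?_⟩
  simpa [hF.map_swap, or_comm] using h

lemma twisted_symm_apply (a : G.Arc) : Twisted F.symm (F a) ↔ Twisted F a := by
  unfold Twisted
  rw [← F.exists_congr_right]
  simp only [F.symm_apply_apply, ne_eq, F.apply_eq_iff_eq]
  exact exists_congr fun b => and_congr_right fun _ => or_comm.trans (or_congr and_comm and_comm)

end Twisted

open Classical in
noncomputable def untwist (F : G.Arc ≃ H.Arc) (a : G.Arc) : H.Arc :=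
  if Twisted F a then (F a).swap else F a

section Untwist

variable {F : G.Arc ≃ H.Arc}

lemma untwist_of_twisted {a : G.Arc} (h : Twisted F a) : untwist F a = (F a).swap := if_pos h

lemma untwist_of_not_twisted {a : G.Arc} (h : ¬ Twisted F a) : untwist F a = F a := if_neg h

lemma untwist_src_eq (hF : IsArcIso F) {a b : G.Arc} (h : a.src = b.src) :
    (untwist F a).src = (untwist F b).src := by
  by_cases hba : b = a
  · rw [hba]
  rcases (hF.collinear_iff a b).2 (Or.inl h) with hFsrc | hFtgt
  · rw [untwist_of_not_twisted (not_twisted_of_src_eq_of_src_eq hF hba h.symm hFsrc.symm),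
      untwist_of_not_twisted (not_twisted_of_src_eq_of_src_eq hF (Ne.symm hba) h hFsrc)]
    exact hFsrc
  · rw [untwist_of_twisted (twisted_of_src_eq_of_tgt_eq hba h.symm hFtgt.symm),
      untwist_of_twisted (twisted_of_src_eq_of_tgt_eq (Ne.symm hba) h hFtgt)]
    exact hFtgt

lemma untwist_swap (hF : IsArcIso F) (a : G.Arc) : untwist F a.swap = (untwist F a).swap := by
  by_cases h : Twisted F a
  · rw [untwist_of_twisted ((twisted_swap hF a).2 h), untwist_of_twisted h, hF.map_swap]
  · rw [untwist_of_not_twisted (mt (twisted_swap hF a).1 h), untwist_of_not_twisted h,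
      hF.map_swap]

lemma untwist_symm_untwist (hF : IsArcIso F) (a : G.Arc) : untwist F.symm (untwist F a) = a := by
  by_cases h : Twisted F a
  · rw [untwist_of_twisted h,
      untwist_of_twisted ((twisted_swap hF.symm _).2 ((twisted_symm_apply a).2 h)), ← hF.map_swap,
      F.symm_apply_apply, Arc.swap_swap]
  · rw [untwist_of_not_twisted h, untwist_of_not_twisted (mt (twisted_symm_apply a).1 h),
      F.symm_apply_apply]

noncomputable def untwistEquiv (hF : IsArcIso F) : G.Arc ≃ H.Arc where
  toFun := untwist F
  invFun := untwist F.symm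
  left_inv := untwist_symm_untwist hF
  right_inv b := by simpa using untwist_symm_untwist hF.symm b

noncomputable def IsArcIso.toIso (hF : IsArcIso F) (hG : G.NoIsolated) (hH : H.NoIsolated) :
    G.Iso H :=
  Iso.ofArcEquiv (untwistEquiv hF) (fun _ _ => untwist_src_eq hF)
    (fun _ _ => untwist_src_eq hF.symm) (untwist_swap hF) hG hH

end Untwist

namespace Box

def atom (a : G.Arc) : G.Box :=
  ⟨({a.src}, {a.tgt}), Set.singleton_nonempty _, Set.singleton_nonempty _, by
    rintro _ rfl _ rfl
    exact a.adj⟩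

lemma atom_le_iff {a : G.Arc} {p : G.Box} : atom a ≤ p ↔ a.src ∈ p.1.1 ∧ a.tgt ∈ p.1.2 :=
  and_congr Set.singleton_subset_iff Set.singleton_subset_iff

lemma atom_injective : Function.Injective (atom (G := G)) := fun a b h => by
  simpa [atom, Arc.ext_iff] using congrArg Subtype.val h

lemma atom_swap (a : G.Arc) : atom a.swap = (atom a).flip := rfl

lemma isMin_atom (a : G.Arc) : IsMin (atom a) := by
  rintro ⟨⟨σ, τ⟩, ⟨x, hx⟩, ⟨y, hy⟩, _⟩ hle
  exact atom_le_iff.2 ⟨hle.1 hx ▸ hx, hle.2 hy ▸ hy⟩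

lemma isMin_iff_exists_atom {p : G.Box} : IsMin p ↔ ∃ a, atom a = p := by
  refine ⟨fun hp => ?_, ?_⟩
  · obtain ⟨⟨σ, τ⟩, ⟨x, hx⟩, ⟨y, hy⟩, hE⟩ := p
    have hle : atom ⟨x, y, hE x hx y hy⟩ ≤ ⟨(σ, τ), ⟨x, hx⟩, ⟨y, hy⟩, hE⟩ :=
      atom_le_iff.2 ⟨hx, hy⟩
    exact ⟨_, le_antisymm hle (hp hle)⟩
  · rintro ⟨a, rfl⟩
    exact isMin_atom a

noncomputable def atomEquiv (G : LoopGraph) : G.Arc ≃ {p : G.Box // IsMin p} :=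
  Equiv.ofBijective (fun a => ⟨atom a, isMin_atom a⟩)
    ⟨fun _ _ h => atom_injective (congrArg Subtype.val h),
     fun ⟨_, hp⟩ => (isMin_iff_exists_atom.1 hp).imp fun _ ha => Subtype.ext ha⟩

lemma collinear_iff_exists_box {a b : G.Arc} :
    a.Collinear b ↔ ∃ p : G.Box, ∀ c, atom c ≤ p ↔ c = a ∨ c = b := by
  have row : ∀ a b : G.Arc, a.src = b.src →
      ∃ p : G.Box, ∀ c, atom c ≤ p ↔ c = a ∨ c = b := by
    intro a b hs
    refine ⟨⟨({a.src}, {a.tgt, b.tgt}), Set.singleton_nonempty _,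
      Set.insert_nonempty _ _, ?_⟩, fun c => ?_⟩
    · intro x hx y hy
      rw [Set.mem_singleton_iff.1 hx]
      rcases (Set.mem_insert_iff.1 hy).imp_right Set.mem_singleton_iff.1 with rfl | rfl
      exacts [a.adj, hs ▸ b.adj]
    · refine atom_le_iff.trans ?_
      simp [Arc.ext_iff, ← hs, and_or_left]
  constructor
  · rintro (hs | ht)
    · exact row a b hs
    · obtain ⟨p, hp⟩ := row a.swap b.swap ht
      exact ⟨p.flip, fun c => by
        rw [atom_le_iff]
        simpa [atom_le_iff, Box.flip, and_comm, Arc.ext_iff] using hp c.swap⟩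
  · rintro ⟨p, hp⟩
    obtain ⟨has, -⟩ := atom_le_iff.1 ((hp a).2 (Or.inl rfl))
    obtain ⟨-, hbt⟩ := atom_le_iff.1 ((hp b).2 (Or.inr rfl))
    rcases (hp ⟨a.src, b.tgt, p.2.2.2 _ has _ hbt⟩).1 (atom_le_iff.2 ⟨has, hbt⟩) with h | h
    · exact Or.inr (congrArg Arc.tgt h).symm
    · exact Or.inl (Arc.ext_iff.1 h).1

noncomputable def arcEquiv (f : G.Box ≃o H.Box) : G.Arc ≃ H.Arc :=
  (atomEquiv G).trans ((f.toEquiv.subtypeEquiv fun _ => f.isMin_apply.symm).trans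
    (atomEquiv H).symm)

lemma atom_arcEquiv (f : G.Box ≃o H.Box) (a : G.Arc) : atom (arcEquiv f a) = f (atom a) :=
  congrArg Subtype.val ((atomEquiv H).apply_symm_apply _)

lemma isArcIso_arcEquiv (f : G.Box ≃o H.Box) (hf : ∀ p : G.Box, f p.flip = (f p).flip) :
    IsArcIso (arcEquiv f) where
  collinear_iff a b := by
    rw [collinear_iff_exists_box, collinear_iff_exists_box, ← f.toEquiv.exists_congr_right]
    refine exists_congr fun p => ?_
    rw [← (arcEquiv f).forall_congr_right]
    simp only [atom_arcEquiv, OrderIso.coe_toEquiv, f.le_iff_le, (arcEquiv f).apply_eq_iff_eq]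
  map_swap a := atom_injective (by rw [atom_arcEquiv, atom_swap, hf, ← atom_arcEquiv, atom_swap])

end Box

def Iso.symm (e : G.Iso H) : H.Iso G :=
  ⟨e.toEquiv.symm, fun u v => by simp [e.edge_iff (e.toEquiv.symm u)]⟩

def Iso.mapBox (e : G.Iso H) (p : G.Box) : H.Box :=
  ⟨(e.toEquiv '' p.1.1, e.toEquiv '' p.1.2), p.2.1.image _, p.2.2.1.image _, by
    rintro _ ⟨x, hx, rfl⟩ _ ⟨y, hy, rfl⟩
    exact (e.edge_iff x y).1 (p.2.2.2 x hx y hy)⟩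

def Iso.boxOrderIso (e : G.Iso H) : G.Box ≃o H.Box where
  toFun := e.mapBox
  invFun := e.symm.mapBox
  left_inv _ := Subtype.ext (Prod.ext (e.toEquiv.symm_image_image _) (e.toEquiv.symm_image_image _))
  right_inv _ :=
    Subtype.ext (Prod.ext (e.toEquiv.image_symm_image _) (e.toEquiv.image_symm_image _))
  map_rel_iff' := and_congr (e.toEquiv.image_subset _ _) (e.toEquiv.image_subset _ _)

end LoopGraph

/-- for graphs without isolated vertices, `G ≅ H` iff `B(G)` and `B(H)`
are isomorphic as ℤ/2-posets (order isomorphisms commuting with the involutions). -/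
theorem graph_iso_iff_box_z2_poset_iso (G H : LoopGraph)
    (hG : G.NoIsolated) (hH : H.NoIsolated) :
    Nonempty (G.Iso H) ↔ ∃ f : G.Box ≃o H.Box, ∀ p : G.Box, f p.flip = (f p).flip := by
  constructor
  · rintro ⟨e⟩
    exact ⟨e.boxOrderIso, fun _ => rfl⟩
  · rintro ⟨f, hf⟩
    exact ⟨(LoopGraph.Box.isArcIso_arcEquiv f hf).toIso hG hH⟩
end

section
/- Let G and H be locally finite stiff graphs without isolated vertices. If the neighborhood complexes N(G) and N(H) are isomorphic as abstract simplicial complexes, then K_2 × G and K_2 × H are isomorphic as 2-colored graphs (each 2-colored by the first projection). -/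
/-- An abstract simplicial complex, given by its vertex type and its simplices
(nonempty finite vertex sets). -/
structure SComplex where
  V : Type
  S : Finset V → Prop

/-- Isomorphism of abstract simplicial complexes: a bijection of vertex sets under
which a finite set is a simplex iff its image is a simplex. -/
def SComplex.Iso (A B : SComplex) : Prop :=
  ∃ e : A.V ≃ B.V, ∀ s : Finset A.V, A.S s ↔ B.S (s.map e.toEmbedding)

/-- The neighborhood complex `N(G)`: vertices are the non-isolated vertices of `G`,
simplices the nonempty finite sets contained in the neighborhood of some vertex. -/
def LoopGraph.NC (G : LoopGraph) : SComplex where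
  V := {x : G.V // ∃ y, G.E x y}
  S s := s.Nonempty ∧ ∃ v : G.V, ∀ x ∈ s, G.E v x.val

/-- A graph is stiff if `N(v) ⊆ N(w)` implies `v = w`. -/
def LoopGraph.Stiff (G : LoopGraph) : Prop :=
  ∀ v w : G.V, {y | G.E v y} ⊆ {y | G.E w y} → v = w

/-!
An isomorphism `N(G) ≅ N(H)` is a vertex bijection `ε` under which a finite set lies in a
neighborhood iff its image does. By local finiteness each `N(v)` is itself a simplex, so
`ε(N(v)) ⊆ N(w)` for some `w`; pulling `N(w)` back and using stiffness of `G` gives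
`ε(N(v)) = N(w)`, and stiffness makes `φ : v ↦ w` a bijection. Since `(0, x) ~ (1, v)` iff
`x ∈ N(v)`, the map `(0, x) ↦ (0, ε x)`, `(1, v) ↦ (1, φ v)` is a color-preserving isomorphism
`K₂ × G ≅ K₂ × H`.
-/

namespace LoopGraph

variable {G H : LoopGraph}

theorem Stiff.eq_of_forall_adj_iff (hG : G.Stiff) {v w : G.V} (h : ∀ x, G.E v x ↔ G.E w x) :
    v = w :=
  hG v w fun x hx => (h x).1 hx

/-- `ε` identifies the simplices of `N(G)` and `N(H)`. -/
def IsNCEquiv (ε : G.V ≃ H.V) : Prop :=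
  ∀ s : Finset G.V, s.Nonempty → ((∃ v, ∀ x ∈ s, G.E v x) ↔ ∃ w, ∀ x ∈ s, H.E w (ε x))

theorem exists_isNCEquiv_of_nc_iso (hG : G.NoIsolated) (hH : H.NoIsolated)
    (h : G.NC.Iso H.NC) : ∃ ε : G.V ≃ H.V, IsNCEquiv ε := by
  obtain ⟨e, he⟩ := h
  refine ⟨(Equiv.subtypeUnivEquiv hG).symm.trans (e.trans (Equiv.subtypeUnivEquiv hH)),
    fun s hs => ?_⟩
  have h := he (s.map (Equiv.subtypeUnivEquiv hG).symm.toEmbedding)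
  simp only [NC, Finset.map_nonempty, hs, true_and, Finset.forall_mem_map] at h
  exact h

theorem IsNCEquiv.symm {ε : G.V ≃ H.V} (hε : IsNCEquiv ε) : IsNCEquiv ε.symm := by
  intro s hs
  simpa only [Finset.forall_mem_map, Equiv.coe_toEmbedding, Equiv.apply_symm_apply, Iff.comm]
    using hε (s.map ε.symm.toEmbedding) (Finset.map_nonempty.2 hs)

theorem IsNCEquiv.exists_forall_adj_imp {ε : G.V ≃ H.V} (hε : IsNCEquiv ε) {v : G.V}
    (hfin : {y | G.E v y}.Finite) (hne : ∃ y, G.E v y) :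
    ∃ w, ∀ x, G.E v x → H.E w (ε x) := by
  obtain ⟨w, hw⟩ := (hε hfin.toFinset (hfin.toFinset_nonempty.2 hne)).1 ⟨v, by simp⟩
  exact ⟨w, fun x hx => hw x (by simpa using hx)⟩

/-- Stiffness upgrades "the image of `N(v)` lies in a neighborhood" to "it is one". -/
theorem IsNCEquiv.exists_forall_adj_iff {ε : G.V ≃ H.V} (hε : IsNCEquiv ε)
    (hGlf : ∀ x : G.V, {y | G.E x y}.Finite) (hHlf : ∀ x : H.V, {y | H.E x y}.Finite)
    (hGst : G.Stiff) (hG : G.NoIsolated) (hH : H.NoIsolated) (v : G.V) :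
    ∃ w, ∀ x, G.E v x ↔ H.E w (ε x) := by
  obtain ⟨w, hw⟩ := hε.exists_forall_adj_imp (hGlf v) (hG v)
  obtain ⟨v', hv'⟩ := hε.symm.exists_forall_adj_imp (hHlf w) (hH w)
  have hback : ∀ x, H.E w (ε x) → G.E v' x := fun x hx => by simpa using hv' (ε x) hx
  obtain rfl : v = v' := hGst v v' fun x hx => hback x (hw x hx)
  exact ⟨w, fun x => ⟨hw x, hback x⟩⟩

theorem exists_equiv_forall_adj_iff (ε : G.V ≃ H.V) (hGst : G.Stiff) (hHst : H.Stiff)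
    (hf : ∀ v, ∃ w, ∀ x, G.E v x ↔ H.E w (ε x))
    (hg : ∀ w, ∃ v, ∀ y, H.E w y ↔ G.E v (ε.symm y)) :
    ∃ φ : G.V ≃ H.V, ∀ v x, G.E v x ↔ H.E (φ v) (ε x) := by
  choose f hf using hf
  choose g hg using hg
  refine ⟨⟨f, g, fun v => ?_, fun w => ?_⟩, hf⟩
  · refine hGst.eq_of_forall_adj_iff fun x => ?_
    rw [hf v x, hg (f v) (ε x), Equiv.symm_apply_apply]
  · refine hHst.eq_of_forall_adj_iff fun y => ?_
    rw [hg w y, hf (g w) (ε.symm y), Equiv.apply_symm_apply]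

theorem exists_kronecker_iso_of_forall_adj_iff (ε φ : G.V ≃ H.V)
    (h : ∀ v x, G.E v x ↔ H.E (φ v) (ε x)) :
    ∃ Φ : (K2.tensor G).Iso (K2.tensor H), ∀ p : Fin 2 × G.V, (Φ.toEquiv p).1 = p.1 := by
  refine ⟨⟨Equiv.prodCongrRight ![ε, φ], ?_⟩, fun _ => rfl⟩
  rintro ⟨i, x⟩ ⟨j, y⟩
  change Fin 2 at i j
  change i ≠ j ∧ G.E x y ↔ i ≠ j ∧ H.E (![ε, φ] i x) (![ε, φ] j y)
  have hsymm : H.E (ε x) (φ y) ↔ G.E x y :=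
    ⟨fun hxy => G.symm ((h y x).2 (H.symm hxy)), fun hxy => H.symm ((h y x).1 (G.symm hxy))⟩
  fin_cases i <;> fin_cases j <;> simp [← h, hsymm]

end LoopGraph

/-- if `G`, `H` are locally finite stiff graphs without isolated vertices
and `N(G) ≅ N(H)`, then `K₂ × G` and `K₂ × H` are isomorphic as 2-colored graphs
(each 2-colored by the first projection). -/
theorem kronecker_two_colored_iso_of_NC_iso (G H : LoopGraph)
    (hGlf : ∀ x : G.V, {y | G.E x y}.Finite) (hHlf : ∀ x : H.V, {y | H.E x y}.Finite)
    (hGst : G.Stiff) (hHst : H.Stiff)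
    (hG : G.NoIsolated) (hH : H.NoIsolated)
    (h : G.NC.Iso H.NC) :
    ∃ φ : (K2.tensor G).Iso (K2.tensor H),
      ∀ p : Fin 2 × G.V, (φ.toEquiv p).1 = p.1 := by
  obtain ⟨ε, hε⟩ := LoopGraph.exists_isNCEquiv_of_nc_iso hG hH h
  obtain ⟨φ, hφ⟩ := LoopGraph.exists_equiv_forall_adj_iff ε hGst hHst
    (hε.exists_forall_adj_iff hGlf hHlf hGst hG hH)
    (hε.symm.exists_forall_adj_iff hHlf hGlf hHst hH hG)
  exact LoopGraph.exists_kronecker_iso_of_forall_adj_iff ε φ hφ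
end
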